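/- arXiv:1701.04913 — 4 statements merged into one kernel-verified Lean document; each statement's English description precedes it below -/
import Mathlib

section
/- For all real x, the series ∑_{q=0}^∞ (1+2q) j_q(x)² converges to 1, where j_q is the spherical Bessel function of the first kind of order q. -/
/-!
Square the power series of `j_q` by the Cauchy product. Since
`Γ(c + j) = j! (c + j - 1 choose j) Γ(c)`, the inner sums are Chu–Vandermonde sums of real
binomial coefficients, and with `Γ(n + 3/2) = (2n+1)‼ √π / 2^(n+1)` this gives
`(1 + 2q) j_q(x)² = ∑_m a(q, m)`, where `n = q + m` and
`a(q, m) = (-1)^m (1 + 2q) C(2n+1, m) x^(2n) / ((2n+1)‼)²`.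
The double series converges absolutely, so it may be summed along the diagonals `q + m = n`
instead; there the alternating sum `∑_{q+m=n} (-1)^m (1 + 2q) C(2n+1, m)` vanishes for `n ≥ 1`,
and only `a(0, 0) = 1` survives.
-/

/-- The spherical Bessel function of the first kind of order `q`, defined by its power
series `j_q(x) = (√π / 2^{q+1}) x^q ∑_{k≥0} (-1)^k (x/2)^{2k} / (k! Γ(k+q+3/2))`. -/
noncomputable def sphBessel (q : ℕ) (x : ℝ) : ℝ :=
  (Real.sqrt Real.pi / 2 ^ (q + 1)) * x ^ q *
    ∑' k : ℕ, (-1 : ℝ) ^ k * (x / 2) ^ (2 * k) /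
      (Nat.factorial k * Real.Gamma ((k : ℝ) + (q : ℝ) + 3 / 2))

/-- The sine integral `Si(x) = ∫₀^x sin t / t dt`. -/
noncomputable def Si (x : ℝ) : ℝ := ∫ t in (0 : ℝ)..x, Real.sin t / t

open Finset Real
open scoped Nat

section Antidiagonal

variable {A : Type*} [AddCommMonoid A] [HasAntidiagonal A]

theorem HasSum.sum_antidiagonal {α : Type*} [AddCommMonoid α] [TopologicalSpace α]
    [ContinuousAdd α] [RegularSpace α] {f : A × A → α} {a : α} (hf : HasSum f a) :
    HasSum (fun n ↦ ∑ p ∈ antidiagonal n, f p) a :=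
  (HasAntidiagonal.sigmaAntidiagonalEquivProd.hasSum_iff.mpr hf).sigma
    fun n ↦ (antidiagonal n).hasSum fun p ↦ f p

theorem Summable.hasSum_of_sum_antidiagonal {α : Type*} [AddCommMonoid α] [TopologicalSpace α]
    [ContinuousAdd α] [RegularSpace α] [T2Space α] {f : A × A → α} {a : α} (hf : Summable f)
    (ha : HasSum (fun n ↦ ∑ p ∈ antidiagonal n, f p) a) : HasSum f a :=
  hf.hasSum.sum_antidiagonal.unique ha ▸ hf.hasSum

theorem summable_of_summable_sum_antidiagonal_norm {E : Type*} [NormedAddCommGroup E]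
    [CompleteSpace E] {f : A × A → E} (hf : Summable fun n ↦ ∑ p ∈ antidiagonal n, ‖f p‖) :
    Summable f := by
  refine .of_norm ?_
  rw [← HasAntidiagonal.sigmaAntidiagonalEquivProd.summable_iff]
  refine (summable_sigma_of_nonneg fun _ ↦ norm_nonneg _).mpr ⟨fun _ ↦ .of_finite, ?_⟩
  convert hf with n
  exact (antidiagonal n).tsum_subtype fun p ↦ ‖f p‖

end Antidiagonal

theorem Real.Gamma_add_nat_eq_factorial_mul_choose {c : ℝ} (hc : 0 < c) (j : ℕ) :
    Gamma (c + j) = j ! * Ring.choose (c + j - 1) j * Gamma c := by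
  have hasc : Gamma (c + j) = (ascPochhammer ℝ j).eval c * Gamma c := by
    induction j with
    | zero => simp
    | succ j ih =>
      rw [Nat.cast_succ, ← add_assoc, Real.Gamma_add_one (by positivity : 0 < c + j).ne', ih,
        ascPochhammer_succ_eval]
      ring
  rw [hasc, ← Ring.multichoose_eq, ← Polynomial.ascPochhammer_smeval_eq_eval,
    ← Ring.factorial_nsmul_multichoose_eq_ascPochhammer, nsmul_eq_mul]

theorem Real.sum_antidiagonal_inv_factorial_mul_Gamma {c : ℝ} (hc : 0 < c) (m : ℕ) :
    ∑ p ∈ antidiagonal m, (p.1 ! * Gamma (c + p.1))⁻¹ * (p.2 ! * Gamma (c + p.2))⁻¹ =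
      Ring.choose (2 * (c + m - 1)) m / Gamma (c + m) ^ 2 := by
  rw [two_mul, Ring.add_choose_eq m (Commute.refl _), sum_div]
  refine sum_congr rfl fun ⟨i, j⟩ hij ↦ ?_
  obtain rfl := HasAntidiagonal.mem_antidiagonal.mp hij
  dsimp only
  have hΓ : 0 < Gamma (c + ↑(i + j)) := Real.Gamma_pos_of_pos (by positivity)
  have hi := Real.Gamma_add_nat_eq_factorial_mul_choose (by positivity : 0 < c + j) i
  have hj := Real.Gamma_add_nat_eq_factorial_mul_choose (by positivity : 0 < c + i) j
  rw [add_assoc, ← Nat.cast_add, add_comm j] at hi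
  rw [add_assoc, ← Nat.cast_add] at hj
  have hci : Ring.choose (c + ↑(i + j) - 1) i ≠ 0 :=
    right_ne_zero_of_mul (left_ne_zero_of_mul (hi ▸ hΓ.ne'))
  have hcj : Ring.choose (c + ↑(i + j) - 1) j ≠ 0 :=
    right_ne_zero_of_mul (left_ne_zero_of_mul (hj ▸ hΓ.ne'))
  rw [sq]
  nth_rw 1 [hi]
  rw [hj]
  field_simp

theorem Real.Gamma_nat_add_three_halves (n : ℕ) :
    Gamma (n + 3 / 2) = (2 * n + 1 : ℕ)‼ * √π / 2 ^ (n + 1) := by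
  rw [← Real.Gamma_nat_add_one_add_half]
  ring_nf

theorem Nat.factorial_two_mul_add_one_le_doubleFactorial_sq (n : ℕ) :
    (2 * n + 1)! ≤ ((2 * n + 1)‼) ^ 2 := by
  have hle : (2 * n)‼ ≤ (2 * n + 1)‼ := by
    induction n with
    | zero => rfl
    | succ n ih =>
      rw [show 2 * (n + 1) = 2 * n + 2 by ring, show 2 * n + 2 + 1 = 2 * n + 1 + 2 by ring,
        Nat.doubleFactorial_add_two, Nat.doubleFactorial_add_two]
      exact Nat.mul_le_mul (by omega) ih
  rw [Nat.factorial_eq_mul_doubleFactorial, sq]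
  exact Nat.mul_le_mul_left _ hle

theorem Nat.cast_succ_mul_choose_succ {R : Type*} [CommRing R] (N k : ℕ) :
    ((k : R) + 1) * N.choose (k + 1) = ((N : R) - k) * N.choose k := by
  rcases le_or_gt k N with hk | hk
  · rw [← Nat.cast_sub hk, ← Nat.cast_succ, ← Nat.cast_mul, ← Nat.cast_mul, mul_comm,
      Nat.choose_succ_right_eq, mul_comm]
  · simp [Nat.choose_eq_zero_of_lt hk, Nat.choose_eq_zero_of_lt (Nat.lt_succ_of_lt hk)]

-- Closed form of the partial sums; the factor `N - 1` keeps it free of division.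
theorem sub_one_mul_sum_range_neg_one_pow_mul_choose {R : Type*} [CommRing R] (N k : ℕ) :
    ((N : R) - 1) * ∑ m ∈ range (k + 1), (-1) ^ m * ((N : R) - 2 * m) * N.choose m =
      (-1) ^ k * (k + 1) * (N - 1 - 2 * k) * N.choose (k + 1) := by
  induction k with
  | zero => simp
  | succ k ih =>
    have h := Nat.cast_succ_mul_choose_succ (R := R) N (k + 1)
    rw [sum_range_succ, mul_add, ih]
    push_cast at h ⊢
    linear_combination (-1) ^ k * ((N : R) - 3 - 2 * k) * h

theorem sum_antidiagonal_neg_one_pow_mul_choose {R : Type*} [CommRing R] [NoZeroDivisors R]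
    [CharZero R] (n : ℕ) :
    ∑ p ∈ antidiagonal n, (-1 : R) ^ p.2 * (1 + 2 * p.1) * (2 * n + 1).choose p.2 =
      if n = 0 then 1 else 0 := by
  split_ifs with hn
  · simp [hn]
  have hrange : ∑ p ∈ antidiagonal n, (-1 : R) ^ p.2 * (1 + 2 * p.1) * (2 * n + 1).choose p.2 =
      ∑ m ∈ range (n + 1), (-1) ^ m * (((2 * n + 1 : ℕ) : R) - 2 * m) * (2 * n + 1).choose m := by
    rw [← Finset.Nat.sum_antidiagonal_swap, Finset.Nat.sum_antidiagonal_eq_sum_range_succ_mk]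
    refine sum_congr rfl fun m hm ↦ ?_
    rw [Prod.swap_prod_mk, Nat.cast_sub (by grind)]
    push_cast
    ring
  have hzero := sub_one_mul_sum_range_neg_one_pow_mul_choose (R := R) (2 * n + 1) n
  rw [show ((2 * n + 1 : ℕ) : R) - 1 - 2 * n = 0 by push_cast; ring, mul_zero, zero_mul] at hzero
  rw [hrange]
  exact (mul_eq_zero.mp hzero).resolve_left (by simpa)

noncomputable def sphBesselTerm (q : ℕ) (x : ℝ) (k : ℕ) : ℝ :=
  (-1) ^ k * (x / 2) ^ (2 * k) / (k ! * Gamma (k + q + 3 / 2))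

theorem norm_sphBesselTerm_le (q : ℕ) (x : ℝ) (k : ℕ) :
    ‖sphBesselTerm q x k‖ ≤ 2 ^ (q + 1) / √π * ((x ^ 2 / 2) ^ k / k !) := by
  have hΓ := Real.Gamma_nat_add_three_halves (k + q)
  push_cast at hΓ
  have hdf : (1 : ℝ) ≤ (2 * (k + q) + 1 : ℕ)‼ := by exact_mod_cast Nat.doubleFactorial_pos _
  calc ‖sphBesselTerm q x k‖
      = 2 ^ (q + 1) / √π * ((x ^ 2 / 2) ^ k / k !) / (2 * (k + q) + 1 : ℕ)‼ := by
        have hΓpos : 0 < Gamma (k + q + 3 / 2) := Gamma_pos_of_pos (by positivity)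
        simp only [sphBesselTerm, norm_div, norm_mul, norm_pow, norm_neg, norm_one, one_pow,
          one_mul, Real.norm_of_nonneg hΓpos.le, Real.norm_eq_abs, Nat.abs_cast]
        have hx : (x ^ 2 / 2) ^ k = (x / 2) ^ (2 * k) * 2 ^ k := by
          rw [pow_mul, ← mul_pow]
          ring
        rw [hΓ, ← abs_div, Even.pow_abs (even_two_mul k), hx]
        field_simp
        ring
    _ ≤ 2 ^ (q + 1) / √π * ((x ^ 2 / 2) ^ k / k !) := div_le_self (by positivity) hdf

theorem summable_norm_sphBesselTerm (q : ℕ) (x : ℝ) :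
    Summable fun k ↦ ‖sphBesselTerm q x k‖ :=
  .of_nonneg_of_le (fun _ ↦ norm_nonneg _) (norm_sphBesselTerm_le q x)
    ((Real.summable_pow_div_factorial _).mul_left _)

theorem sum_antidiagonal_sphBesselTerm_mul (q : ℕ) (x : ℝ) (m : ℕ) :
    ∑ p ∈ antidiagonal m, sphBesselTerm q x p.1 * sphBesselTerm q x p.2 =
      (-1) ^ m * (x / 2) ^ (2 * m) * (2 * (q + m) + 1).choose m /
        Gamma ((q + m : ℕ) + 3 / 2) ^ 2 := by
  have h := Real.sum_antidiagonal_inv_factorial_mul_Gamma (by positivity : (0 : ℝ) < q + 3 / 2) m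
  rw [show 2 * ((q : ℝ) + 3 / 2 + m - 1) = ((2 * (q + m) + 1 : ℕ) : ℝ) by push_cast; ring,
    Ring.choose_natCast] at h
  rw [show ((q + m : ℕ) : ℝ) + 3 / 2 = q + 3 / 2 + m by push_cast; ring, mul_div_assoc, ← h,
    mul_sum]
  refine sum_congr rfl fun p hp ↦ ?_
  obtain rfl := HasAntidiagonal.mem_antidiagonal.mp hp
  simp only [sphBesselTerm, add_comm (p.1 : ℝ), add_comm (p.2 : ℝ), add_assoc]
  field_simp
  ring

noncomputable def sphBesselSqTerm (x : ℝ) (p : ℕ × ℕ) : ℝ :=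
  (-1) ^ p.2 * (1 + 2 * p.1) * (2 * (p.1 + p.2) + 1).choose p.2 * (x ^ 2) ^ (p.1 + p.2) /
    ((2 * (p.1 + p.2) + 1)‼ : ℝ) ^ 2

theorem hasSum_sphBesselSqTerm_fiber (x : ℝ) (q : ℕ) :
    HasSum (fun m ↦ sphBesselSqTerm x (q, m)) ((1 + 2 * q) * sphBessel q x ^ 2) := by
  have hu := summable_norm_sphBesselTerm q x
  have hcauchy : HasSum
      (fun m ↦ ∑ p ∈ antidiagonal m, sphBesselTerm q x p.1 * sphBesselTerm q x p.2)
      ((∑' k, sphBesselTerm q x k) ^ 2) := by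
    rw [sq, tsum_mul_tsum_eq_tsum_sum_antidiagonal_of_summable_norm hu hu]
    exact (summable_norm_sum_mul_antidiagonal_of_summable_norm hu hu).of_norm.hasSum
  set c : ℝ := (1 + 2 * q) * (√π / 2 ^ (q + 1) * x ^ q) ^ 2
  have hterm : (fun m ↦ sphBesselSqTerm x (q, m)) =
      fun m ↦ c * ∑ p ∈ antidiagonal m, sphBesselTerm q x p.1 * sphBesselTerm q x p.2 := by
    ext m
    rw [sum_antidiagonal_sphBesselTerm_mul, Gamma_nat_add_three_halves, sphBesselSqTerm]
    simp only [c]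
    rw [div_pow x]
    field_simp
    ring
  have hsq : (1 + 2 * q) * sphBessel q x ^ 2 = c * (∑' k, sphBesselTerm q x k) ^ 2 := by
    simp only [sphBessel, sphBesselTerm, c]
    ring
  rw [hterm, hsq]
  exact hcauchy.mul_left c

theorem sum_antidiagonal_sphBesselSqTerm (x : ℝ) (n : ℕ) :
    ∑ p ∈ antidiagonal n, sphBesselSqTerm x p = if n = 0 then 1 else 0 := by
  have h : ∀ p ∈ antidiagonal n, sphBesselSqTerm x p =
      (-1) ^ p.2 * (1 + 2 * p.1) * (2 * n + 1).choose p.2 *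
        ((x ^ 2) ^ n / ((2 * n + 1)‼ : ℝ) ^ 2) := by
    intro p hp
    rw [sphBesselSqTerm, HasAntidiagonal.mem_antidiagonal.mp hp, mul_div_assoc]
  rw [sum_congr rfl h, ← sum_mul, sum_antidiagonal_neg_one_pow_mul_choose]
  split_ifs with hn <;> simp [hn]

theorem sum_antidiagonal_norm_sphBesselSqTerm_le (x : ℝ) (n : ℕ) :
    ∑ p ∈ antidiagonal n, ‖sphBesselSqTerm x p‖ ≤ (4 * x ^ 2) ^ n / n ! := by
  have hnorm : ∀ p ∈ antidiagonal n, ‖sphBesselSqTerm x p‖ ≤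
      (1 + 2 * n) * (2 * n + 1).choose p.2 * (x ^ 2) ^ n / ((2 * n + 1)‼ : ℝ) ^ 2 := by
    intro p hp
    have hpn := HasAntidiagonal.mem_antidiagonal.mp hp
    have hq : (p.1 : ℝ) ≤ n := by exact_mod_cast (by omega : p.1 ≤ n)
    rw [sphBesselSqTerm, hpn, Real.norm_eq_abs, abs_div, abs_mul, abs_mul, abs_mul, abs_pow,
      abs_neg, abs_one, one_pow, one_mul, Nat.abs_cast, abs_of_nonneg (by positivity),
      abs_of_nonneg (by positivity), abs_of_nonneg (by positivity)]
    gcongr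
  have hchoose : ∑ p ∈ antidiagonal n, ((2 * n + 1).choose p.2 : ℝ) = 4 ^ n := by
    rw [← Finset.Nat.sum_antidiagonal_swap, Finset.Nat.sum_antidiagonal_eq_sum_range_succ_mk]
    exact_mod_cast Nat.sum_range_choose_halfway n
  have hfact : ((2 * n + 1)! : ℝ) ≤ ((2 * n + 1)‼ : ℝ) ^ 2 := by
    exact_mod_cast Nat.factorial_two_mul_add_one_le_doubleFactorial_sq n
  calc ∑ p ∈ antidiagonal n, ‖sphBesselSqTerm x p‖
      ≤ ∑ p ∈ antidiagonal n,
          (1 + 2 * n) * (2 * n + 1).choose p.2 * (x ^ 2) ^ n / ((2 * n + 1)‼ : ℝ) ^ 2 :=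
        sum_le_sum hnorm
    _ = (1 + 2 * n) * (x ^ 2) ^ n / ((2 * n + 1)‼ : ℝ) ^ 2 * 4 ^ n := by
        rw [← hchoose, mul_sum]
        exact sum_congr rfl fun _ _ ↦ by ring
    _ ≤ (1 + 2 * n) * (x ^ 2) ^ n / (2 * n + 1)! * 4 ^ n := by
        gcongr
    _ = (4 * x ^ 2) ^ n / (2 * n)! := by
        rw [Nat.factorial_succ]
        push_cast
        field_simp
        ring
    _ ≤ (4 * x ^ 2) ^ n / n ! := by
        gcongr
        omega

theorem summable_sphBesselSqTerm (x : ℝ) : Summable (sphBesselSqTerm x) :=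
  summable_of_summable_sum_antidiagonal_norm (.of_nonneg_of_le
    (fun _ ↦ sum_nonneg fun _ _ ↦ norm_nonneg _) (sum_antidiagonal_norm_sphBesselSqTerm_le x)
    (Real.summable_pow_div_factorial _))

/-- For all real `x`, `∑_{q=0}^∞ (1+2q) j_q(x)²` converges to `1`. -/
theorem sphBessel_hasSum_one (x : ℝ) :
    HasSum (fun q : ℕ => (1 + 2 * (q : ℝ)) * sphBessel q x ^ 2) 1 := by
  have hdiag : HasSum (fun n ↦ ∑ p ∈ antidiagonal n, sphBesselSqTerm x p) 1 := by
    simp only [sum_antidiagonal_sphBesselSqTerm]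
    exact hasSum_ite_eq 0 1
  exact ((summable_sphBesselSqTerm x).hasSum_of_sum_antidiagonal hdiag).prod_fiberwise
    (hasSum_sphBesselSqTerm_fiber x)
end

section
/- For all real x ≠ 0, ∑_{q=0}^∞ j_q(x) j_{q+1}(x) = (1 − j_0(2x))/(2x). -/
/-!
Expand `j_q(x) = ∑ₖ c_{q,k} x^{2k+q}`. The Cauchy product of the series of `j_q` and `j_{q+1}` is
evaluated by the Chu–Vandermonde identity at the half-integers `q + n + 1/2`, `q + n + 3/2`,
which turns `∑_{k+l=n} 1/(k! l! Γ(q+k+3/2) Γ(q+l+5/2))` into a single binomial coefficient: the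
coefficient of `x^{2m+1}` (`m = q + n`) is `(-1)ⁿ C(2m+2, n) 2^{2m+1} / ((2m+3)! C(2m+1, m))`.
Summing over `q + n = m` leaves the partial alternating sum `∑_{n ≤ m} (-1)ⁿ C(2m+2, n) =
(-1)^m C(2m+1, m)`, so the whole sum is `∑ₘ (-1)^m 2^{2m+1} x^{2m+1} / (2m+3)!`, the Taylor series
of `(1 - sin(2x)/(2x))/(2x)`. The double series converges absolutely, which justifies regrouping.
-/

open Finset Real Nat

theorem Summable.tsum_eq_tsum_sum_antidiagonal {A α : Type*} [AddCommMonoid A] [HasAntidiagonal A]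
    [AddCommMonoid α] [TopologicalSpace α] [ContinuousAdd α] [T3Space α] {f : A × A → α}
    (hf : Summable f) : ∑' p, f p = ∑' n, ∑ p ∈ antidiagonal n, f p := by
  conv_rhs => congr; ext; rw [← sum_finset_coe, ← tsum_fintype (L := .unconditional _)]
  rw [← HasAntidiagonal.sigmaAntidiagonalEquivProd.tsum_eq f]
  exact Summable.tsum_sigma' (fun n => (hasSum_fintype _).summable)
    (HasAntidiagonal.sigmaAntidiagonalEquivProd.summable_iff.mpr hf)

theorem Ring.choose_eq_Gamma_div {r : ℝ} {k : ℕ} (h : 0 < r - k + 1) :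
    choose r k = Gamma (r + 1) / (k ! * Gamma (r - k + 1)) := by
  induction k generalizing r with
  | zero =>
    have : Gamma (r + 1) ≠ 0 := (Gamma_pos_of_pos (by simpa using h)).ne'
    simp [this]
  | succ k ih =>
    have hr : 0 < r := by push_cast at h; linarith [(k.cast_nonneg : (0 : ℝ) ≤ k)]
    have hrec := Ring.choose_smul_choose r (Nat.le_add_left 1 k)
    rw [Nat.choose_one_right, Ring.choose_one_right, Nat.add_sub_cancel, nsmul_eq_mul,
      ih (by push_cast at h ⊢; linarith), Nat.cast_one, sub_add_cancel] at hrec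
    rw [Gamma_add_one hr.ne', show r - ↑(k + 1) + 1 = r - 1 - k + 1 by push_cast; ring,
      factorial_succ]
    have hk : ((k + 1 : ℕ) : ℝ) ≠ 0 := by positivity
    apply mul_left_cancel₀ hk
    rw [hrec]
    push_cast
    field_simp

namespace Real

theorem Gamma_nat_add_three_halves_s5 (n : ℕ) :
    Gamma (n + 3 / 2) = (2 * n + 1)! * √π / (2 ^ (2 * n + 1) * n !) := by
  have h := Gamma_nat_add_one_add_half n
  rw [show (n : ℝ) + 1 + 1 / 2 = n + 3 / 2 by ring] at h
  have hfac : ((2 * n + 1)! : ℝ) = (2 * n + 1)‼ * (2 ^ n * n !) := by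
    rw [factorial_eq_mul_doubleFactorial, doubleFactorial_two_mul]; push_cast; ring
  rw [h, hfac]
  field_simp
  ring

theorem exists_pos_forall_le_Gamma : ∃ c > 0, ∀ s > 0, c ≤ Gamma s := by
  obtain ⟨s₀, hs₀, hmin⟩ := exists_isMinOn_Gamma_Ioi
  exact ⟨Gamma s₀, Gamma_pos_of_pos (by linarith [hs₀.1]), fun s hs => hmin hs⟩

theorem sum_antidiagonal_inv_factorial_mul_Gamma_s5 {a b : ℝ} (ha : 0 < a) (hb : 0 < b) (n : ℕ) :
    ∑ kl ∈ antidiagonal n, 1 / (kl.1 ! * kl.2 ! * Gamma (a + kl.1) * Gamma (b + kl.2)) =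
      Ring.choose (a + b + 2 * n - 2) n / (Gamma (a + n) * Gamma (b + n)) := by
  have hV := Ring.add_choose_eq (r := b + n - 1) (s := a + n - 1) n (Commute.all _ _)
  rw [show b + n - 1 + (a + n - 1) = a + b + 2 * n - 2 by ring] at hV
  rw [hV, sum_div]
  refine sum_congr rfl fun kl hkl => ?_
  have hn : (kl.1 : ℝ) + kl.2 = n := by exact_mod_cast mem_antidiagonal.mp hkl
  have hb' : b + n - 1 - kl.1 + 1 = b + kl.2 := by linarith
  have ha' : a + n - 1 - kl.2 + 1 = a + kl.1 := by linarith
  rw [Ring.choose_eq_Gamma_div (by rw [hb']; positivity),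
    Ring.choose_eq_Gamma_div (by rw [ha']; positivity), hb', ha',
    sub_add_cancel, sub_add_cancel]
  have := (Gamma_pos_of_pos (show 0 < a + kl.1 by positivity)).ne'
  have := (Gamma_pos_of_pos (show 0 < b + kl.2 by positivity)).ne'
  have := (Gamma_pos_of_pos (show 0 < a + n by positivity)).ne'
  have := (Gamma_pos_of_pos (show 0 < b + n by positivity)).ne'
  field_simp

theorem pi_div_Gamma_mul_Gamma (m : ℕ) :
    π / (Gamma (m + 3 / 2) * Gamma (m + 5 / 2)) =
      2 ^ (4 * m + 4) / ((2 * m + 3)! * (2 * m + 1).choose m) := by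
  have h₁ := Gamma_nat_add_three_halves_s5 m
  have h₂ := Gamma_nat_add_three_halves_s5 (m + 1)
  rw [show ((m + 1 : ℕ) : ℝ) + 3 / 2 = m + 5 / 2 by push_cast; ring] at h₂
  have hchoose : ((2 * m + 1).choose m : ℝ) * m ! * (m + 1)! = (2 * m + 1)! := by
    have := Nat.choose_mul_factorial_mul_factorial (show m ≤ 2 * m + 1 by omega)
    rw [show 2 * m + 1 - m = m + 1 by omega] at this
    exact_mod_cast this
  rw [h₁, h₂, ← hchoose, show 2 * (m + 1) + 1 = 2 * m + 3 by ring]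
  have : (√π) ^ 2 = π := sq_sqrt pi_pos.le
  field_simp
  rw [this]
  ring

end Real

noncomputable def sphBesselCoeff (q k : ℕ) : ℝ :=
  (-1) ^ k * √π / (2 ^ (2 * k + q + 1) * k ! * Gamma (k + q + 3 / 2))

theorem sphBessel_eq_tsum (q : ℕ) (x : ℝ) :
    sphBessel q x = ∑' k, sphBesselCoeff q k * x ^ (2 * k + q) := by
  rw [sphBessel, ← tsum_mul_left]
  refine tsum_congr fun k => ?_
  rw [sphBesselCoeff, div_pow, pow_add, pow_add]
  have := (Gamma_pos_of_pos (show 0 < (k : ℝ) + q + 3 / 2 by positivity)).ne'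
  field_simp
  ring

theorem sphBesselCoeff_zero (k : ℕ) : sphBesselCoeff 0 k = (-1) ^ k / (2 * k + 1)! := by
  simp only [sphBesselCoeff, CharP.cast_eq_zero, add_zero, Gamma_nat_add_three_halves_s5]
  have : √π ≠ 0 := by positivity
  field_simp

theorem summable_norm_sphBesselCoeff_mul_pow (q : ℕ) (x : ℝ) :
    Summable fun k => ‖sphBesselCoeff q k * x ^ (2 * k + q)‖ := by
  obtain ⟨c, hc, hGamma⟩ := exists_pos_forall_le_Gamma
  refine .of_nonneg_of_le (fun k => norm_nonneg _) (fun k => ?_)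
    ((summable_pow_div_factorial ((x / 2) ^ 2)).mul_left (√π / (2 * c) * (|x| / 2) ^ q))
  have hΓ := hGamma (k + q + 3 / 2) (by positivity)
  calc ‖sphBesselCoeff q k * x ^ (2 * k + q)‖
      = √π / (2 ^ (2 * k + q + 1) * k ! * Gamma (k + q + 3 / 2)) * (|x| ^ 2) ^ k * |x| ^ q := by
        simp only [norm_mul, norm_pow, Real.norm_eq_abs]
        rw [sphBesselCoeff, abs_div, abs_mul, abs_pow,
          abs_neg, abs_one, one_pow, one_mul, abs_of_pos (by positivity : 0 < √π),
          abs_of_pos (by positivity)]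
        ring
    _ ≤ √π / (2 ^ (2 * k + q + 1) * k ! * c) * (|x| ^ 2) ^ k * |x| ^ q := by gcongr
    _ = √π / (2 * c) * (|x| / 2) ^ q * (((x / 2) ^ 2) ^ k / k !) := by
        rw [sq_abs, div_pow, div_pow, div_pow, ← pow_mul, ← pow_mul, pow_add, pow_add]
        field_simp

noncomputable def crossCoeff (m n : ℕ) : ℝ :=
  (-1) ^ n * (2 * m + 2).choose n * 2 ^ (2 * m + 1) / ((2 * m + 3)! * (2 * m + 1).choose m)

theorem sphBesselCoeff_mul_sphBesselCoeff_succ (q k l : ℕ) :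
    sphBesselCoeff q k * sphBesselCoeff (q + 1) l = (-1) ^ (k + l) * π / 2 ^ (2 * (q + k + l) + 3) *
      (1 / (k ! * l ! * Gamma (q + 3 / 2 + k) * Gamma (q + 5 / 2 + l))) := by
  rw [sphBesselCoeff, sphBesselCoeff, Nat.cast_add_one,
    show (k : ℝ) + q + 3 / 2 = q + 3 / 2 + k by ring,
    show (l : ℝ) + (q + 1) + 3 / 2 = q + 5 / 2 + l by ring]
  have := (Gamma_pos_of_pos (show 0 < (q : ℝ) + 3 / 2 + k by positivity)).ne'
  have := (Gamma_pos_of_pos (show 0 < (q : ℝ) + 5 / 2 + l by positivity)).ne'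
  have : (√π) ^ 2 = π := sq_sqrt pi_pos.le
  field_simp
  rw [this]
  ring

theorem sum_antidiagonal_sphBesselCoeff_mul (q n : ℕ) :
    ∑ kl ∈ antidiagonal n, sphBesselCoeff q kl.1 * sphBesselCoeff (q + 1) kl.2 =
      crossCoeff (q + n) n := by
  have hterm : ∀ kl ∈ antidiagonal n, sphBesselCoeff q kl.1 * sphBesselCoeff (q + 1) kl.2 =
      (-1) ^ n * π / 2 ^ (2 * (q + n) + 3) *
        (1 / (kl.1 ! * kl.2 ! * Gamma (q + 3 / 2 + kl.1) * Gamma (q + 5 / 2 + kl.2))) := by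
    intro kl hkl
    rw [sphBesselCoeff_mul_sphBesselCoeff_succ, add_assoc q, mem_antidiagonal.mp hkl]
  rw [sum_congr rfl hterm, ← mul_sum,
    sum_antidiagonal_inv_factorial_mul_Gamma_s5 (by positivity) (by positivity),
    show (q : ℝ) + 3 / 2 + (q + 5 / 2) + 2 * n - 2 = (2 * (q + n) + 2 : ℕ) by push_cast; ring]
  calc _ = ((2 * (q + n) + 2).choose n : ℝ) * ((-1) ^ n / 2 ^ (2 * (q + n) + 3)) *
        (π / (Gamma ((q + n : ℕ) + 3 / 2) * Gamma ((q + n : ℕ) + 5 / 2))) := by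
        rw [Ring.choose_natCast]; push_cast; ring_nf
    _ = _ := by
        rw [pi_div_Gamma_mul_Gamma, crossCoeff]
        field_simp
        ring

theorem sphBessel_mul_sphBessel_succ (q : ℕ) (x : ℝ) :
    sphBessel q x * sphBessel (q + 1) x = ∑' n, crossCoeff (q + n) n * x ^ (2 * (q + n) + 1) := by
  rw [sphBessel_eq_tsum, sphBessel_eq_tsum, tsum_mul_tsum_eq_tsum_sum_antidiagonal_of_summable_norm
    (summable_norm_sphBesselCoeff_mul_pow q x) (summable_norm_sphBesselCoeff_mul_pow (q + 1) x)]
  refine tsum_congr fun n => ?_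
  rw [← sum_antidiagonal_sphBesselCoeff_mul, sum_mul]
  refine sum_congr rfl fun kl hkl => ?_
  have hn := mem_antidiagonal.mp hkl
  rw [show 2 * (q + n) + 1 = (2 * kl.1 + q) + (2 * kl.2 + (q + 1)) by omega, pow_add]
  ring

theorem sum_antidiagonal_crossCoeff (m : ℕ) :
    ∑ p ∈ antidiagonal m, crossCoeff m p.2 = (-1) ^ m * 2 ^ (2 * m + 1) / (2 * m + 3)! := by
  have halt : ∑ p ∈ antidiagonal m, ((-1) ^ p.2 * (2 * m + 2).choose p.2 : ℝ) =
      (-1) ^ m * (2 * m + 1).choose m := by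
    rw [← Nat.sum_antidiagonal_swap, Nat.sum_antidiagonal_eq_sum_range_succ_mk]
    exact_mod_cast Int.alternating_sum_range_choose_eq_choose (n := 2 * m + 1) (m := m)
  have hchoose : ((2 * m + 1).choose m : ℝ) ≠ 0 := by
    exact_mod_cast (Nat.choose_pos (by omega)).ne'
  simp only [crossCoeff, ← sum_div, ← sum_mul, halt]
  field_simp

theorem abs_crossCoeff_le (m n : ℕ) : |crossCoeff m n| ≤ 2 ^ (4 * m + 3) / (2 * m + 3)! := by
  have hchoose : (1 : ℝ) ≤ (2 * m + 1).choose m := by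
    exact_mod_cast Nat.choose_pos (by omega)
  have hle : ((2 * m + 2).choose n : ℝ) ≤ 2 ^ (2 * m + 2) := by
    exact_mod_cast Nat.choose_le_two_pow _ _
  rw [crossCoeff, abs_div, abs_mul, abs_mul, abs_pow, abs_neg, abs_one, one_pow, one_mul,
    Nat.abs_cast, abs_pow, abs_two, abs_of_pos (by positivity)]
  calc ((2 * m + 2).choose n : ℝ) * 2 ^ (2 * m + 1) / ((2 * m + 3)! * (2 * m + 1).choose m)
      ≤ 2 ^ (2 * m + 2) * 2 ^ (2 * m + 1) / ((2 * m + 3)! * 1) := by gcongr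
    _ = 2 ^ (4 * m + 3) / (2 * m + 3)! := by rw [mul_one, ← pow_add]; ring_nf

theorem summable_crossCoeff_mul_pow (x : ℝ) :
    Summable fun p : ℕ × ℕ => crossCoeff (p.1 + p.2) p.2 * x ^ (2 * (p.1 + p.2) + 1) := by
  have hexp : Summable fun k => ‖(16 * x ^ 2) ^ k / (k ! : ℝ)‖ := by
    simpa [Real.norm_eq_abs, abs_of_nonneg, (by positivity : 0 ≤ 16 * x ^ 2)] using
      summable_pow_div_factorial (16 * x ^ 2)
  refine .of_norm_bounded ((summable_mul_of_summable_norm hexp hexp).mul_left (8 * |x|))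
    fun ⟨q, n⟩ => ?_
  have hfac : (q ! * n ! : ℝ) ≤ (2 * (q + n) + 3)! := by
    exact_mod_cast (Nat.le_of_dvd (factorial_pos _)
      (factorial_mul_factorial_dvd_factorial_add q n)).trans (factorial_le (by omega))
  calc ‖crossCoeff (q + n) n * x ^ (2 * (q + n) + 1)‖
      ≤ 2 ^ (4 * (q + n) + 3) / (2 * (q + n) + 3)! * |x| ^ (2 * (q + n) + 1) := by
        rw [norm_mul, norm_pow, Real.norm_eq_abs, Real.norm_eq_abs]
        gcongr
        exact abs_crossCoeff_le _ _
    _ ≤ 2 ^ (4 * (q + n) + 3) / (q ! * n !) * |x| ^ (2 * (q + n) + 1) := by gcongr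
    _ = 8 * |x| * ((16 * x ^ 2) ^ q / q ! * ((16 * x ^ 2) ^ n / n !)) := by
        have h16 : (2 : ℝ) ^ (4 * (q + n) + 3) = 8 * 16 ^ q * 16 ^ n := by
          rw [pow_add, pow_mul, pow_add]; norm_num; ring
        rw [h16, ← sq_abs x]
        field_simp
        ring

theorem one_sub_sphBessel_zero_two_mul_div {x : ℝ} (hx : x ≠ 0) :
    (1 - sphBessel 0 (2 * x)) / (2 * x) =
      ∑' m : ℕ, (-1) ^ m * 2 ^ (2 * m + 1) / (2 * m + 3)! * x ^ (2 * m + 1) := by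
  have hj := (summable_norm_sphBesselCoeff_mul_pow 0 (2 * x)).of_norm.hasSum
  rw [← sphBessel_eq_tsum, ← hasSum_nat_add_iff' 1, sum_range_one, sphBesselCoeff_zero] at hj
  simp only [pow_zero, mul_zero, add_zero, zero_add, factorial_one, Nat.cast_one, div_one,
    mul_one] at hj
  have := (hj.div_const (-(2 * x))).tsum_eq
  rw [← neg_div_neg_eq, neg_sub, ← this]
  refine tsum_congr fun m => ?_
  rw [sphBesselCoeff_zero, show 2 * (m + 1) + 1 = 2 * m + 3 by ring,
    show 2 * (m + 1) = (2 * m + 1) + 1 by ring, pow_succ, pow_succ, mul_pow]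
  field_simp

/-- For all real `x ≠ 0`, `∑_{q=0}^∞ j_q(x) j_{q+1}(x) = (1 − j_0(2x))/(2x)`. -/
theorem sphBessel_tsum_cross (x : ℝ) (hx : x ≠ 0) :
    ∑' q : ℕ, sphBessel q x * sphBessel (q + 1) x
      = (1 - sphBessel 0 (2 * x)) / (2 * x) := by
  have hsum := summable_crossCoeff_mul_pow x
  calc ∑' q : ℕ, sphBessel q x * sphBessel (q + 1) x
      = ∑' (q : ℕ) (n : ℕ), crossCoeff (q + n) n * x ^ (2 * (q + n) + 1) :=
        tsum_congr fun q => sphBessel_mul_sphBessel_succ q x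
    _ = ∑' m, ∑ p ∈ antidiagonal m, crossCoeff (p.1 + p.2) p.2 * x ^ (2 * (p.1 + p.2) + 1) := by
        rw [← hsum.tsum_prod, hsum.tsum_eq_tsum_sum_antidiagonal]
    _ = ∑' m : ℕ, (-1) ^ m * 2 ^ (2 * m + 1) / (2 * m + 3)! * x ^ (2 * m + 1) := by
        refine tsum_congr fun m => ?_
        rw [← sum_antidiagonal_crossCoeff, sum_mul]
        exact sum_congr rfl fun p hp => by rw [mem_antidiagonal.mp hp]
    _ = (1 - sphBessel 0 (2 * x)) / (2 * x) := (one_sub_sphBessel_zero_two_mul_div hx).symm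
end

section
/- For the Gaussian measurement functions m_q(θ) = (1/q!)(θ²/(4σ²))^q e^{−θ²/(4σ²)}, q ∈ ℕ, the sum over all q of N·m_q'(θ)²/m_q(θ) equals N/σ² for every θ > 0. -/
/-!
`m_q(θ)` is the Poisson probability of `q` at the mean `x = θ²/(4σ²)`. Its score is
`m_q'/m_q = (q - x) x'/x`, so the Fisher information of the family is `(x'/x)²` times the
Poisson variance `x`, i.e. `x'²/x = 1/σ²`.
-/

open Real Nat

noncomputable def poissonTerm (x : ℝ) (q : ℕ) : ℝ := 1 / (q ! : ℝ) * x ^ q * exp (-x)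

lemma poissonTerm_ne_zero {x : ℝ} (hx : x ≠ 0) (q : ℕ) : poissonTerm x q ≠ 0 := by
  unfold poissonTerm; positivity

lemma natCast_succ_mul_poissonTerm_succ (x : ℝ) (q : ℕ) :
    ((q : ℝ) + 1) * poissonTerm x (q + 1) = x * poissonTerm x q := by
  unfold poissonTerm
  rw [factorial_succ, pow_succ]
  push_cast
  field_simp

lemma hasSum_poissonTerm (x : ℝ) : HasSum (poissonTerm x) 1 := by
  have h := (NormedSpace.expSeries_div_hasSum_exp x).mul_right (exp (-x))
  rw [← exp_eq_exp_ℝ, ← exp_add, add_neg_cancel, exp_zero] at h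
  exact h.congr_fun fun q => by rw [poissonTerm]; ring

lemma hasSum_natCast_mul_poissonTerm (x : ℝ) :
    HasSum (fun q : ℕ => (q : ℝ) * poissonTerm x q) x := by
  rw [← hasSum_nat_add_iff' 1]
  simpa [natCast_succ_mul_poissonTerm_succ] using (hasSum_poissonTerm x).mul_left x

lemma hasSum_natCast_sq_mul_poissonTerm (x : ℝ) :
    HasSum (fun q : ℕ => (q : ℝ) ^ 2 * poissonTerm x q) (x ^ 2 + x) := by
  rw [← hasSum_nat_add_iff' 1]
  have h := ((hasSum_natCast_mul_poissonTerm x).add (hasSum_poissonTerm x)).mul_left x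
  simp only [Finset.range_one, Finset.sum_singleton, CharP.cast_eq_zero, ne_eq,
    OfNat.ofNat_ne_zero, not_false_eq_true, zero_pow, zero_mul, sub_zero]
  rw [show x ^ 2 + x = x * (x + 1) by ring]
  refine h.congr_fun fun q => ?_
  push_cast
  rw [sq, mul_assoc, natCast_succ_mul_poissonTerm_succ]
  ring

lemma hasSum_sq_sub_mul_poissonTerm (x : ℝ) :
    HasSum (fun q : ℕ => ((q : ℝ) - x) ^ 2 * poissonTerm x q) x := by
  have h := ((hasSum_natCast_sq_mul_poissonTerm x).sub
    ((hasSum_natCast_mul_poissonTerm x).mul_left (2 * x))).add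
    ((hasSum_poissonTerm x).mul_left (x ^ 2))
  rw [show x ^ 2 + x - 2 * x * x + x ^ 2 * 1 = x by ring] at h
  exact h.congr_fun fun q => by ring

lemma hasDerivAt_poissonTerm (q : ℕ) {x : ℝ} (hx : x ≠ 0) :
    HasDerivAt (poissonTerm · q) ((q - x) / x * poissonTerm x q) x := by
  have h := ((hasDerivAt_pow q x).const_mul (1 / (q ! : ℝ))).mul (hasDerivAt_neg x).exp
  refine h.congr_deriv ?_
  unfold poissonTerm
  rcases q with _ | q
  · simp [neg_div, div_self hx]
  · simp only [add_tsub_cancel_right, pow_succ]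
    field_simp
    ring

lemma hasSum_fisherInformation_poissonTerm_comp {g : ℝ → ℝ} {g' θ : ℝ}
    (hg : HasDerivAt g g' θ) (hgθ : g θ ≠ 0) :
    HasSum (fun q : ℕ => deriv (fun t => poissonTerm (g t) q) θ ^ 2 / poissonTerm (g θ) q)
      (g' ^ 2 / g θ) := by
  have h := (hasSum_sq_sub_mul_poissonTerm (g θ)).mul_left ((g' / g θ) ^ 2)
  rw [show (g' / g θ) ^ 2 * g θ = g' ^ 2 / g θ by field_simp] at h
  refine h.congr_fun fun q => ?_
  have hd : deriv (fun t => poissonTerm (g t) q) θ = (q - g θ) / g θ * poissonTerm (g θ) q * g' :=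
    ((hasDerivAt_poissonTerm q hgθ).comp θ hg).deriv
  rw [hd]
  have hp := poissonTerm_ne_zero hgθ q
  field_simp

theorem gaussian_total_fisher_information_general (σ N θ : ℝ) (hσ : 0 < σ)
    (hθ : 0 < θ) :
    ∑' q : ℕ,
        N * (deriv (fun t : ℝ =>
            (1 / (Nat.factorial q : ℝ)) * (t ^ 2 / (4 * σ ^ 2)) ^ q
              * Real.exp (-(t ^ 2 / (4 * σ ^ 2)))) θ) ^ 2 /
          ((1 / (Nat.factorial q : ℝ)) * (θ ^ 2 / (4 * σ ^ 2)) ^ q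
            * Real.exp (-(θ ^ 2 / (4 * σ ^ 2))))
      = N / σ ^ 2 := by
  have hg : HasDerivAt (fun t : ℝ => t ^ 2 / (4 * σ ^ 2)) (2 * θ / (4 * σ ^ 2)) θ := by
    simpa using (hasDerivAt_pow 2 θ).div_const (4 * σ ^ 2)
  have hgθ : θ ^ 2 / (4 * σ ^ 2) ≠ 0 := by positivity
  have h := (hasSum_fisherInformation_poissonTerm_comp hg hgθ).mul_left N
  simp only [poissonTerm, ← mul_div_assoc] at h
  rw [h.tsum_eq]
  field_simp
  ring

/-- For the Gaussian measurement functions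
`m_q(θ) = (1/q!)(θ²/(4σ²))^q e^{−θ²/(4σ²)}`, the total Fisher information
`∑_q N m_q'(θ)²/m_q(θ)` equals `N/σ²` for every `θ > 0`. -/
theorem gaussian_total_fisher_information (σ N θ : ℝ) (hσ : 0 < σ) (hN : 0 < N)
    (hθ : 0 < θ) :
    ∑' q : ℕ,
        N * (deriv (fun t : ℝ =>
            (1 / (Nat.factorial q : ℝ)) * (t ^ 2 / (4 * σ ^ 2)) ^ q
              * Real.exp (-(t ^ 2 / (4 * σ ^ 2)))) θ) ^ 2 /
          ((1 / (Nat.factorial q : ℝ)) * (θ ^ 2 / (4 * σ ^ 2)) ^ q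
            * Real.exp (-(θ ^ 2 / (4 * σ ^ 2))))
      = N / σ ^ 2 :=
  gaussian_total_fisher_information_general σ N θ hσ hθ
end

section
/- For the Gaussian ASF, the leaky 1-BinSPADE Fisher information I_ρ(θ) = (Nρ/σ²)·(1 − θ²/(4σ²))² / (exp(θ²/(4σ²)) − ρ·θ²/(4σ²)) tends to Nρ/σ² as θ → 0⁺, for any efficiency 0 < ρ ≤ 1; in contrast, the leaky 0-BinSPADE Fisher information I₀,ρ(θ) = (Nρ/σ²)·(θ²/(4σ²))/(exp(θ²/(4σ²)) − ρ) tends to 0 as θ → 0⁺ whenever ρ < 1, and tends to N/σ² when ρ = 1. -/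
open Filter

/-- For a Gaussian ASF, the leaky 1-BinSPADE Fisher information tends to
`Nρ/σ²` as `θ → 0⁺` for any efficiency `0 < ρ ≤ 1`; the leaky 0-BinSPADE Fisher
information tends to `0` as `θ → 0⁺` whenever `ρ < 1`, and tends to `N/σ²` when `ρ = 1`. -/
theorem leaky_binspade_limits (N σ ρ : ℝ) (hN : 0 < N) (hσ : 0 < σ)
    (hρ : 0 < ρ) (hρ1 : ρ ≤ 1) :
    Tendsto (fun θ : ℝ =>
        (N * ρ / σ ^ 2) * (1 - θ ^ 2 / (4 * σ ^ 2)) ^ 2 /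
          (Real.exp (θ ^ 2 / (4 * σ ^ 2)) - ρ * (θ ^ 2 / (4 * σ ^ 2))))
      (nhdsWithin 0 (Set.Ioi 0)) (nhds (N * ρ / σ ^ 2)) ∧
    (ρ < 1 →
      Tendsto (fun θ : ℝ =>
          (N * ρ / σ ^ 2) * (θ ^ 2 / (4 * σ ^ 2)) /
            (Real.exp (θ ^ 2 / (4 * σ ^ 2)) - ρ))
        (nhdsWithin 0 (Set.Ioi 0)) (nhds 0)) ∧
    (ρ = 1 →
      Tendsto (fun θ : ℝ =>
          (N * ρ / σ ^ 2) * (θ ^ 2 / (4 * σ ^ 2)) /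
            (Real.exp (θ ^ 2 / (4 * σ ^ 2)) - ρ))
        (nhdsWithin 0 (Set.Ioi 0)) (nhds (N / σ ^ 2))) := by
  have hσ2 : (0:ℝ) < σ ^ 2 := by positivity
  refine ⟨?_, ?_, ?_⟩
  · have hc : ContinuousAt (fun θ : ℝ =>
        (N * ρ / σ ^ 2) * (1 - θ ^ 2 / (4 * σ ^ 2)) ^ 2 /
          (Real.exp (θ ^ 2 / (4 * σ ^ 2)) - ρ * (θ ^ 2 / (4 * σ ^ 2)))) 0 := by
      apply ContinuousAt.div
      · fun_prop
      · fun_prop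
      · simp
    simpa using hc.tendsto.mono_left
      (nhdsWithin_le_nhds : nhdsWithin (0:ℝ) (Set.Ioi 0) ≤ nhds 0)
  · intro hlt
    have hc : ContinuousAt (fun θ : ℝ =>
        (N * ρ / σ ^ 2) * (θ ^ 2 / (4 * σ ^ 2)) /
          (Real.exp (θ ^ 2 / (4 * σ ^ 2)) - ρ)) 0 := by
      apply ContinuousAt.div
      · fun_prop
      · fun_prop
      · simp
        linarith
    simpa using hc.tendsto.mono_left
      (nhdsWithin_le_nhds : nhdsWithin (0:ℝ) (Set.Ioi 0) ≤ nhds 0)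
  · intro h; subst h
    have hslope : Tendsto (fun x : ℝ => x⁻¹ * (Real.exp x - 1))
        (nhdsWithin 0 {(0:ℝ)}ᶜ) (nhds 1) := by
      have hd := Real.hasDerivAt_exp 0
      rw [hasDerivAt_iff_tendsto_slope] at hd
      simpa [slope_fun_def, Real.exp_zero] using hd
    have hinv : Tendsto (fun x : ℝ => x / (Real.exp x - 1))
        (nhdsWithin 0 {(0:ℝ)}ᶜ) (nhds 1) := by
      have h2 := hslope.inv₀ one_ne_zero
      simpa [mul_inv, inv_inv, div_eq_mul_inv, mul_comm] using h2
    have hg : Tendsto (fun θ : ℝ => θ ^ 2 / (4 * σ ^ 2))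
        (nhdsWithin 0 (Set.Ioi 0)) (nhdsWithin 0 {(0:ℝ)}ᶜ) := by
      rw [tendsto_nhdsWithin_iff]
      constructor
      · have hc : ContinuousAt (fun θ : ℝ => θ ^ 2 / (4 * σ ^ 2)) 0 := by fun_prop
        simpa using hc.tendsto.mono_left nhdsWithin_le_nhds
      · filter_upwards [self_mem_nhdsWithin] with θ hθ
        have hθ0 : (0:ℝ) < θ := hθ
        exact (by positivity : (0:ℝ) < θ ^ 2 / (4 * σ ^ 2)).ne'
    have := (hinv.comp hg).const_mul (N * 1 / σ ^ 2)
    simpa [Function.comp, mul_div_assoc] using this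
end
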